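/- arXiv:2005.00911 — 3 statements merged into one kernel-verified Lean document; each statement's English description precedes it below -/
import Mathlib

section
/- The set of additive characters of F_{q^n} with F_q-order equal to x - 1 is exactly {χ_a : a ∈ F_q, a ≠ 0}. -/
open Polynomial

noncomputable section

/-- The action `g ∘ α = Σ aᵢ α^(qⁱ)` of `F_q[x]` on an extension of `F_q`. -/
def fqAct (F : Type*) [Field F] [Fintype F] {E : Type*} [Field E] [Algebra F E]
    (g : F[X]) (α : E) : E :=
  g.sum fun i a => algebraMap F E a * α ^ (Fintype.card F) ^ i

/-- `m` is the `F_q`-order of `α`: the monic generator of the annihilator of `α`. -/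
def IsFqOrder (F : Type*) [Field F] [Fintype F] {E : Type*} [Field E] [Algebra F E]
    (α : E) (m : F[X]) : Prop :=
  m.Monic ∧ fqAct F m α = 0 ∧ ∀ g : F[X], fqAct F g α = 0 → m ∣ g

/-- `m` is the `F_q`-order of the additive character `χ`: the monic generator of the ideal
of `g` with `g ∘ χ` trivial, where `(g ∘ χ) β = χ (g ∘ β)`. -/
def IsCharFqOrder (F : Type*) [Field F] [Fintype F] {E : Type*} [Field E] [Algebra F E]
    (χ : E → ℂ) (m : F[X]) : Prop :=
  m.Monic ∧ (∀ β : E, χ (fqAct F m β) = 1) ∧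
    ∀ g : F[X], (∀ β : E, χ (fqAct F g β) = 1) → m ∣ g

/-- The monic reciprocal `f*(x) = f(0)⁻¹ x^(deg f) f(1/x)` of a polynomial. -/
def monicRecip {K : Type*} [Field K] (f : K[X]) : K[X] :=
  C (f.coeff 0)⁻¹ * f.reverse

/-- The additive character `χ_a : β ↦ exp(2πi · Tr(aβ)/p)`. -/
def stdChar (p : ℕ) [Fact p.Prime] {E : Type*} [Field E] [Algebra (ZMod p) E]
    (a : E) : E → ℂ :=
  fun β => Complex.exp (2 * Real.pi * Complex.I *
    ((Algebra.trace (ZMod p) E (a * β)).val : ℂ) / p)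

/-- `β` is normal over `F_q`: its Frobenius conjugates form an `F_q`-basis. -/
def IsNormalElem (F : Type*) [Field F] [Fintype F] {E : Type*} [Field E] [Algebra F E]
    (β : E) : Prop :=
  LinearIndependent F (fun i : Fin (Module.finrank F E) => β ^ (Fintype.card F) ^ (i : ℕ)) ∧
  Submodule.span F (Set.range fun i : Fin (Module.finrank F E) => β ^ (Fintype.card F) ^ (i : ℕ)) = ⊤

section Aux

variable (p : ℕ) [Fact p.Prime] (E : Type*) [Field E] [Algebra (ZMod p) E]
  [Finite E] [CharP E p]

/-- Frobenius as a `ZMod p`-algebra automorphism of a finite field. -/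
def frobAlg : E ≃ₐ[ZMod p] E :=
  AlgEquiv.ofRingEquiv (f := RingEquiv.ofBijective (frobenius E p)
      ((Finite.injective_iff_bijective).mp (frobenius E p).injective))
    (fun r => by
      simp [frobenius_def, ← map_pow, ZMod.pow_card])

lemma trace_frob (x : E) :
    Algebra.trace (ZMod p) E (x ^ p) = Algebra.trace (ZMod p) E x := by
  have := Algebra.trace_eq_of_algEquiv (frobAlg p E) x
  simpa [frobAlg, frobenius_def] using this

lemma trace_pow_p_pow (k : ℕ) (x : E) :
    Algebra.trace (ZMod p) E (x ^ p ^ k) = Algebra.trace (ZMod p) E x := by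
  induction k with
  | zero => simp
  | succ k ih => rw [pow_succ, pow_mul, trace_frob, ih]

lemma trace_nondeg {c : E} (h : ∀ β : E, Algebra.trace (ZMod p) E (c * β) = 0) :
    c = 0 := by
  have hnd := traceForm_nondegenerate (ZMod p) E
  exact hnd.1 c (fun y => by simpa [Algebra.traceForm_apply] using h y)

/-- The additive character `β ↦ exp(2πi Tr(cβ).val/p)` as a bundled `AddChar`. -/
def psiChar (c : E) : AddChar E ℂ :=
  ZMod.stdAddChar.compAddMonoidHom
    ((Algebra.trace (ZMod p) E).toAddMonoidHom.comp (AddMonoidHom.mulLeft c))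

lemma psiChar_apply (c β : E) :
    psiChar p E c β = ZMod.stdAddChar (Algebra.trace (ZMod p) E (c * β)) := rfl

lemma psiChar_injective : Function.Injective (psiChar p E) := by
  intro c c' h
  have h' : ∀ β : E, Algebra.trace (ZMod p) E ((c - c') * β) = 0 := by
    intro β
    have := DFunLike.congr_fun h β
    rw [psiChar_apply, psiChar_apply] at this
    have := ZMod.injective_stdAddChar this
    rw [sub_mul, map_sub, this, sub_self]
  exact sub_eq_zero.mp (trace_nondeg p E h')

lemma psiChar_surjective : Function.Surjective (psiChar p E) := by
  have : Fintype E := Fintype.ofFinite E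
  have hb : Function.Bijective (psiChar p E) := by
    rw [Fintype.bijective_iff_injective_and_card]
    exact ⟨psiChar_injective p E, (AddChar.card_eq).symm⟩
  exact hb.2

end Aux

section Aux2

variable (p : ℕ) [Fact p.Prime] (F : Type*) [Field F] [Fintype F] [CharP F p]
  (E : Type*) [Field E] [Algebra F E] [Algebra (ZMod p) E] [Finite E] [CharP E p]

lemma stdChar_eq_psi (c β : E) : stdChar p c β = psiChar p E c β := by
  rw [psiChar_apply, ZMod.stdAddChar_apply, ZMod.toCircle_apply]
  rfl

lemma fqAct_X_sub_one (β : E) :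
    fqAct F (X - 1) β = β ^ (Fintype.card F) - β := by
  have h : (X - 1 : F[X]) = X + C (-1) := by rw [map_neg, C_1]; ring
  rw [fqAct, h, Polynomial.sum_add_index _ _ _ (fun i => by simp)
    (fun i b₁ b₂ => by rw [map_add, add_mul]),
    Polynomial.sum_X_index (by simp), Polynomial.sum_C_index (by simp)]
  simp [sub_eq_add_neg]

lemma trace_fqAct (a : F) (g : F[X]) (β : E) :
    Algebra.trace (ZMod p) E (algebraMap F E a * fqAct F g β)
      = Algebra.trace (ZMod p) E (algebraMap F E (a * g.eval 1) * β) := by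
  obtain ⟨k, hpk, hk⟩ := FiniteField.card F p
  have key : ∀ i : ℕ, ∀ b : F,
      Algebra.trace (ZMod p) E
          (algebraMap F E a * (algebraMap F E b * β ^ (Fintype.card F) ^ i))
        = Algebra.trace (ZMod p) E (algebraMap F E (a * b) * β) := by
    intro i b
    have h1 : algebraMap F E a * (algebraMap F E b * β ^ (Fintype.card F) ^ i)
        = (algebraMap F E (a * b) * β) ^ (Fintype.card F) ^ i := by
      rw [mul_pow, ← map_pow, FiniteField.pow_card_pow, map_mul, mul_assoc]
    rw [h1, hk, ← pow_mul, trace_pow_p_pow]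
  have heval : a * g.eval 1 = ∑ i ∈ g.support, a * g.coeff i := by
    rw [eval_eq_sum, Polynomial.sum, Finset.mul_sum]
    simp
  rw [fqAct, Polynomial.sum, Finset.mul_sum, map_sum, heval, map_sum, Finset.sum_mul,
    map_sum]
  exact Finset.sum_congr rfl fun i _ => key i _

lemma mem_range_of_pow_card (c : E) (hc : c ^ (Fintype.card F) = c) :
    ∃ a : F, algebraMap F E a = c := by
  classical
  have : Fintype E := Fintype.ofFinite E
  set q := Fintype.card F with hqdef
  have hq : 1 < q := Fintype.one_lt_card
  set P : E[X] := X ^ q - X with hP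
  have hP0 : P ≠ 0 := FiniteField.X_pow_card_sub_X_ne_zero E hq
  have hdeg : P.natDegree = q := FiniteField.X_pow_card_sub_X_natDegree_eq E hq
  set t : Finset E := Finset.univ.image (algebraMap F E) with ht
  have htc : t.card = q := by
    rw [ht, Finset.card_image_of_injective _ (algebraMap F E).injective, Finset.card_univ]
  have hsub : t ⊆ P.roots.toFinset := by
    intro x hx
    obtain ⟨b, -, rfl⟩ := Finset.mem_image.mp hx
    rw [Multiset.mem_toFinset, mem_roots hP0]
    simp only [hP, IsRoot, eval_sub, eval_pow, eval_X, ← map_pow]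
    rw [hqdef, FiniteField.pow_card, sub_self]
  have hcard : P.roots.toFinset.card ≤ q :=
    le_trans (Multiset.toFinset_card_le _) ((Polynomial.card_roots' P).trans_eq hdeg)
  have hteq : t = P.roots.toFinset :=
    Finset.eq_of_subset_of_card_le hsub (hcard.trans_eq htc.symm)
  have hcmem : c ∈ P.roots.toFinset := by
    rw [Multiset.mem_toFinset, mem_roots hP0]
    simp [hP, IsRoot, hc]
  rw [← hteq] at hcmem
  obtain ⟨a, -, ha⟩ := Finset.mem_image.mp hcmem
  exact ⟨a, ha⟩

end Aux2

theorem charFqOrder_X_sub_one_iff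
    (p : ℕ) [Fact p.Prime] (F : Type*) [Field F] [Fintype F] [CharP F p]
    (E : Type*) [Field E] [Algebra F E] [Algebra (ZMod p) E]
    (n : ℕ) (hn : 1 ≤ n) (hrank : Module.finrank F E = n) (χ : AddChar E ℂ) :
    IsCharFqOrder F (⇑χ) (X - 1) ↔
      ∃ a : F, a ≠ 0 ∧ ∀ β : E, χ β = stdChar p (algebraMap F E a) β := by

  haveI : Module.Finite F E := Module.finite_of_finrank_pos (by omega)
  haveI : Finite E := Module.finite_of_finite F
  haveI : CharP E p := charP_of_injective_algebraMap (algebraMap F E).injective p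
  haveI : Fintype E := Fintype.ofFinite E
  have hXm : (X - 1 : F[X]) = X - C 1 := by rw [C_1]
  obtain ⟨k, hpk, hk⟩ := FiniteField.card F p
  set q := Fintype.card F with hq
  constructor
  · rintro ⟨hmon, h2, h3⟩
    obtain ⟨c, hc⟩ := psiChar_surjective p E χ
    have h2' : ∀ β : E, Algebra.trace (ZMod p) E (c * (β ^ q - β)) = 0 := by
      intro β
      have h := h2 β
      rw [fqAct_X_sub_one, ← hc, psiChar_apply] at h
      exact ZMod.injective_stdAddChar (h.trans (AddChar.map_zero_eq_one _).symm)
    have hcard : Fintype.card E = q ^ n := by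
      rw [Module.card_eq_pow_finrank (K := F), hrank]
    have hqn : c ^ q ^ n = c := by rw [← hcard]; exact FiniteField.pow_card c
    set d := c ^ q ^ (n - 1) with hd
    have hdq : d ^ q = c := by
      rw [hd, ← pow_mul, ← pow_succ, Nat.sub_add_cancel hn, hqn]
    have key : ∀ β : E, Algebra.trace (ZMod p) E ((d - c) * β) = 0 := by
      intro β
      have h := h2' β
      have h1 : c * β ^ q = (d * β) ^ q := by rw [mul_pow, hdq]
      rw [mul_sub, h1, map_sub, hk, trace_pow_p_pow, sub_eq_zero] at h
      rw [sub_mul, map_sub, h, sub_self]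
    have hdc : d = c := sub_eq_zero.mp (trace_nondeg p E key)
    have hcq : c ^ q = c := by nth_rewrite 1 [← hdc]; exact hdq
    obtain ⟨a, ha⟩ := mem_range_of_pow_card F E c hcq
    have ha0 : a ≠ 0 := by
      rintro rfl
      rw [map_zero] at ha
      have hχ1 : ∀ β : E, χ (fqAct F (1 : F[X]) β) = 1 := by
        intro β
        rw [← hc, psiChar_apply, ← ha, zero_mul, map_zero, AddChar.map_zero_eq_one]
      have hdvd := h3 1 hχ1
      have := isUnit_of_dvd_one hdvd
      rw [hXm] at this
      have := Polynomial.degree_eq_zero_of_isUnit this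
      rw [degree_X_sub_C] at this
      exact one_ne_zero this
    refine ⟨a, ha0, fun β => ?_⟩
    rw [← hc, stdChar_eq_psi, ha]
  · rintro ⟨a, ha0, hχ⟩
    have hc : ∀ β : E, χ β = psiChar p E (algebraMap F E a) β := fun β =>
      (hχ β).trans (stdChar_eq_psi p E _ β)
    refine ⟨by rw [hXm]; exact monic_X_sub_C 1, ?_, ?_⟩
    · intro β
      rw [hc, psiChar_apply, trace_fqAct]
      simp
    · intro g hg
      have htr : ∀ β : E,
          Algebra.trace (ZMod p) E (algebraMap F E (a * g.eval 1) * β) = 0 := by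
        intro β
        have h := hg β
        rw [hc, psiChar_apply, trace_fqAct] at h
        exact ZMod.injective_stdAddChar (h.trans (AddChar.map_zero_eq_one _).symm)
      have h0 : algebraMap F E (a * g.eval 1) = 0 := trace_nondeg p E htr
      have h0' : a * g.eval 1 = 0 := (algebraMap F E).injective (by rw [h0, map_zero])
      have hev : g.eval 1 = 0 := by
        rcases mul_eq_zero.mp h0' with h | h
        · exact absurd h ha0
        · exact h
      rw [hXm]
      exact dvd_iff_isRoot.mpr hev
end
end

section
/- An additive character χ of F_{q^n} has F_q-order x^n - 1 if and only if χ = χ_β for some β ∈ F_{q^n} that is normal over F_q. -/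
open Polynomial

noncomputable section

section Aux

variable (p : ℕ) [Fact p.Prime] (F : Type*) [Field F] [Fintype F] [CharP F p]
  {E : Type*} [Field E] [Algebra F E]

/-- Frobenius `x ↦ x^q` as an `F`-linear endomorphism. -/
def frobLin : E →ₗ[F] E where
  toFun x := x ^ Fintype.card F
  map_add' x y := by
    have : CharP E p := charP_of_injective_algebraMap (algebraMap F E).injective p
    obtain ⟨k, hp, hk⟩ := FiniteField.card F p
    rw [hk]
    exact add_pow_char_pow ..
  map_smul' a x := by
    simp only [_root_.smul_pow, RingHom.id_apply, FiniteField.pow_card]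

include p

@[simp] lemma frobLin_apply (x : E) : frobLin p F x = x ^ Fintype.card F := rfl

lemma frobLin_pow_apply (i : ℕ) (x : E) :
    ((frobLin p F : E →ₗ[F] E) ^ i) x = x ^ (Fintype.card F) ^ i := by
  induction i generalizing x with
  | zero => simp
  | succ i ih =>
    rw [pow_succ, Module.End.mul_apply, frobLin_apply, ih, ← pow_mul, pow_succ, mul_comm (Fintype.card F)]

lemma fqAct_aeval (g : F[X]) (α : E) :
    fqAct F g α = Polynomial.aeval (frobLin p F : E →ₗ[F] E) g α := by
  rw [aeval_def, eval₂_eq_sum, fqAct, Polynomial.sum_def, Polynomial.sum_def,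
    LinearMap.coe_sum, Finset.sum_apply]
  refine Finset.sum_congr rfl fun i _ => ?_
  rw [Module.End.mul_apply, Module.algebraMap_end_apply, frobLin_pow_apply, Algebra.smul_def]

lemma fqAct_mul (g h : F[X]) (α : E) :
    fqAct F (g * h) α = fqAct F g (fqAct F h α) := by
  simp only [fqAct_aeval p F, map_mul, Module.End.mul_apply]

lemma fqAct_add (g h : F[X]) (α : E) :
    fqAct F (g + h) α = fqAct F g α + fqAct F h α := by
  simp only [fqAct_aeval p F, map_add, LinearMap.add_apply]

lemma fqAct_sum {ι : Type*} (s : Finset ι) (f : ι → F[X]) (α : E) :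
    fqAct F (∑ i ∈ s, f i) α = ∑ i ∈ s, fqAct F (f i) α := by
  simp only [fqAct_aeval p F, map_sum, LinearMap.sum_apply]

lemma fqAct_C_mul_X_pow (a : F) (k : ℕ) (α : E) :
    fqAct F (C a * X ^ k) α = algebraMap F E a * α ^ (Fintype.card F) ^ k := by
  rw [fqAct_aeval p F, map_mul, map_pow, aeval_C, aeval_X, Module.End.mul_apply,
    Module.algebraMap_end_apply, frobLin_pow_apply, Algebra.smul_def]

lemma fqAct_X_pow_sub_one (n : ℕ) (α : E) (hE : α ^ (Fintype.card F) ^ n = α) :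
    fqAct F (X ^ n - 1 : F[X]) α = 0 := by
  rw [fqAct_aeval p F, map_sub, map_pow, map_one, aeval_X, LinearMap.sub_apply,
    frobLin_pow_apply, Module.End.one_apply, hE, sub_self]

end Aux

section Pc

variable {F : Type*} [Field F]

/-- The polynomial `Σ_{i<n} c_i X^i`. -/
def Pc (n : ℕ) (c : Fin n → F) : F[X] := ∑ i : Fin n, C (c i) * X ^ (i : ℕ)

lemma Pc_coeff (n : ℕ) (c : Fin n → F) (j : ℕ) :
    (Pc n c).coeff j = if h : j < n then c ⟨j, h⟩ else 0 := by
  rw [Pc, finset_sum_coeff]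
  simp only [coeff_C_mul, coeff_X_pow]
  split
  · next h =>
    rw [Finset.sum_eq_single (⟨j, h⟩ : Fin n)]
    · simp
    · intro b _ hb
      rw [if_neg, mul_zero]
      exact fun hj => hb (by ext; simp [hj])
    · simp
  · next h =>
    apply Finset.sum_eq_zero
    intro b _
    rw [if_neg, mul_zero]
    exact fun hj => h (hj ▸ b.isLt)

lemma Pc_degree_lt (n : ℕ) (hn : 0 < n) (c : Fin n → F) : (Pc n c).degree < n := by
  rw [degree_lt_iff_coeff_zero]
  intro m hm
  rw [Pc_coeff, dif_neg]
  exact fun h => absurd (lt_of_lt_of_le (Nat.cast_lt.mpr h) hm) (lt_irrefl _)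

lemma Pc_eq_zero {n : ℕ} {c : Fin n → F} (h : Pc n c = 0) : ∀ i, c i = 0 := by
  intro i
  have := congrArg (fun r : F[X] => r.coeff (i : ℕ)) h
  simpa [Pc_coeff, i.isLt] using this

lemma eq_Pc_of_degree_lt {n : ℕ} (r : F[X]) (h : r.degree < n) :
    r = Pc n fun i => r.coeff (i : ℕ) := by
  ext j
  rw [Pc_coeff]
  split
  · rfl
  · next hj => exact coeff_eq_zero_of_degree_lt (lt_of_lt_of_le h (by
      exact_mod_cast Nat.cast_le.mpr (le_of_not_gt hj)))

/-- The reversed coefficient vector `i ↦ c_{(n-i) % n}`. -/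
def hatc (n : ℕ) (hn : 0 < n) (c : Fin n → F) : Fin n → F :=
  fun i => c ⟨(n - (i : ℕ)) % n, Nat.mod_lt _ hn⟩

lemma natinv {n : ℕ} (hn : 0 < n) {i : ℕ} (hi : i < n) : (n - (n - i) % n) % n = i := by
  rcases Nat.eq_zero_or_pos i with rfl | h
  · simp
  · have h1 : (n - i) % n = n - i := Nat.mod_eq_of_lt (by omega)
    rw [h1, show n - (n - i) = i by omega, Nat.mod_eq_of_lt hi]

lemma hatc_hatc (n : ℕ) (hn : 0 < n) (c : Fin n → F) : hatc n hn (hatc n hn c) = c := by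
  funext i
  exact congrArg c (Fin.ext (natinv hn i.isLt))

end Pc

section Trace

variable (p : ℕ) [Fact p.Prime] (F : Type*) [Field F] [Fintype F] [CharP F p]
  {E : Type*} [Field E] [Algebra F E] [Algebra (ZMod p) E] [Finite E]

include p F in
lemma tr_frob (x : E) :
    Algebra.trace (ZMod p) E (x ^ Fintype.card F) = Algebra.trace (ZMod p) E x := by
  have hchar : CharP E p := charP_of_injective_algebraMap (algebraMap F E).injective p
  obtain ⟨k, hp, hk⟩ := FiniteField.card F p
  let f : E →ₐ[ZMod p] E :=
    { toRingHom := iterateFrobenius E p k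
      commutes' := fun t => by
        show iterateFrobenius E p ↑k ((algebraMap (ZMod p) E) t) = (algebraMap (ZMod p) E) t
        rw [show (algebraMap (ZMod p) E) t = ((t.val : ℕ) : E) by
          rw [← map_natCast (algebraMap (ZMod p) E) t.val, ZMod.natCast_val, ZMod.cast_id],
          map_natCast] }
  let e : E ≃ₐ[ZMod p] E :=
    AlgEquiv.ofBijective f ((Finite.injective_iff_bijective).mp (iterateFrobenius E p k).injective)
  have h1 : e x = x ^ Fintype.card F := by
    show iterateFrobenius E p k x = x ^ Fintype.card F
    rw [iterateFrobenius_def, hk]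
  rw [← h1, Algebra.trace_eq_of_algEquiv e x]

include p F in
lemma tr_frob_pow (j : ℕ) (x : E) :
    Algebra.trace (ZMod p) E (x ^ (Fintype.card F) ^ j) = Algebra.trace (ZMod p) E x := by
  induction j generalizing x with
  | zero => simp
  | succ j ih =>
    rw [pow_succ', pow_mul, ih (x ^ Fintype.card F), tr_frob p F]

include p in
lemma fqAct_Pc {n : ℕ} (c : Fin n → F) (α : E) :
    fqAct F (Pc n c) α = ∑ i : Fin n, algebraMap F E (c i) * α ^ (Fintype.card F) ^ (i : ℕ) := by
  rw [Pc, fqAct_sum p F]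
  exact Finset.sum_congr rfl fun i _ => fqAct_C_mul_X_pow p F ..

include p in
lemma key_pair {n : ℕ} (hn : 0 < n) (hE : ∀ x : E, x ^ (Fintype.card F) ^ n = x)
    (c : Fin n → F) (β γ : E) :
    Algebra.trace (ZMod p) E (β * fqAct F (Pc n c) γ) =
      Algebra.trace (ZMod p) E (fqAct F (Pc n (hatc n hn c)) β * γ) := by
  have hterm : ∀ (a : F) (i : ℕ), i < n →
      Algebra.trace (ZMod p) E (β * (algebraMap F E a * γ ^ (Fintype.card F) ^ i)) =
      Algebra.trace (ZMod p) E
        (algebraMap F E a * β ^ (Fintype.card F) ^ ((n - i) % n) * γ) := by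
    intro a i hi
    have hb : β ^ (Fintype.card F) ^ ((n - i) % n) = β ^ (Fintype.card F) ^ (n - i) := by
      rcases Nat.eq_zero_or_pos i with rfl | h
      · simp [Nat.mod_self, hE β]
      · rw [Nat.mod_eq_of_lt (by omega)]
    have h2 : (β * (algebraMap F E a * γ ^ (Fintype.card F) ^ i)) ^ (Fintype.card F) ^ (n - i)
        = algebraMap F E a * β ^ (Fintype.card F) ^ ((n - i) % n) * γ := by
      rw [hb, mul_pow, mul_pow, ← map_pow, FiniteField.pow_card_pow, ← pow_mul,
        ← pow_add, show i + (n - i) = n by omega, hE γ]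
      ring
    rw [← h2, tr_frob_pow p F]
  have hinvol : Function.Involutive
      (fun i : Fin n => (⟨(n - (i : ℕ)) % n, Nat.mod_lt _ hn⟩ : Fin n)) :=
    fun i => Fin.ext (natinv hn i.isLt)
  let σ : Equiv.Perm (Fin n) := Function.Involutive.toPerm _ hinvol
  rw [fqAct_Pc p F, fqAct_Pc p F, Finset.mul_sum, Finset.sum_mul, map_sum, map_sum]
  refine Fintype.sum_equiv σ _ _ fun i => ?_
  have hσ : ∀ j : Fin n, σ j = (⟨(n - (j : ℕ)) % n, Nat.mod_lt _ hn⟩ : Fin n) := fun j => rfl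
  have hh : hatc n hn c (σ i) = c i := by
    rw [hσ, hatc]
    exact congrArg c (Fin.ext (natinv hn i.isLt))
  rw [hh, hσ]
  exact hterm (c i) i i.isLt

end Trace

theorem charFqOrder_max_iff_normal
    (p : ℕ) [Fact p.Prime] (F : Type*) [Field F] [Fintype F] [CharP F p]
    (E : Type*) [Field E] [Algebra F E] [Algebra (ZMod p) E]
    (n : ℕ) (hn : 1 ≤ n) (hrank : Module.finrank F E = n) (χ : AddChar E ℂ) :
    IsCharFqOrder F (⇑χ) (X ^ n - 1) ↔
      ∃ β : E, IsNormalElem F β ∧ ∀ γ : E, χ γ = stdChar p β γ := by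
  subst hrank
  set N := Module.finrank F E with hNdef
  have hn' : 0 < N := hn
  haveI : FiniteDimensional F E := FiniteDimensional.of_finrank_pos hn'
  haveI : Finite E := Module.finite_of_finite F
  haveI : Fintype E := Fintype.ofFinite E
  haveI : CharP E p := charP_of_injective_algebraMap (algebraMap F E).injective p
  haveI : Module.Finite (ZMod p) E := Module.Finite.of_finite
  haveI : NeZero p := ⟨(Fact.out : p.Prime).ne_zero⟩
  have hcard : Fintype.card E = Fintype.card F ^ N := Module.card_eq_pow_finrank (K := F) (V := E)
  have hE : ∀ x : E, x ^ (Fintype.card F) ^ N = x := fun x => by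
    rw [← hcard]; exact FiniteField.pow_card x
  set ζ : ℂ := Complex.exp (2 * ↑Real.pi * Complex.I / p) with hζdef
  have hζ : IsPrimitiveRoot ζ p := Complex.isPrimitiveRoot_exp p (NeZero.ne p)
  set ψ : AddChar (ZMod p) ℂ := AddChar.zmodChar p hζ.pow_eq_one with hψdef
  have hψ : ∀ t : ZMod p, ψ t = ζ ^ t.val := fun t => rfl
  have hψinj : Function.Injective ψ := by
    intro a b hab
    rw [hψ, hψ] at hab
    exact ZMod.val_injective p (hζ.pow_inj (ZMod.val_lt a) (ZMod.val_lt b) hab)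
  have hψ1 : ∀ t, ψ t = 1 ↔ t = 0 := fun t =>
    ⟨fun h => hψinj (h.trans (AddChar.map_zero_eq_one ψ).symm),
     fun h => h ▸ AddChar.map_zero_eq_one ψ⟩
  have hstdeq : ∀ (a γ : E), stdChar p a γ = ψ (Algebra.trace (ZMod p) E (a * γ)) := by
    intro a γ
    rw [hψ, stdChar, hζdef, ← Complex.exp_nat_mul]
    congr 1
    push_cast
    ring
  have hnd : ∀ x : E, (∀ γ : E, Algebra.trace (ZMod p) E (x * γ) = 0) → x = 0 := by
    intro x hx
    refine (traceForm_nondegenerate (ZMod p) E).1 x (fun y => ?_)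
    rw [Algebra.traceForm_apply, hx y]
  have hmon : (X ^ N - 1 : F[X]).Monic := by
    have := Polynomial.monic_X_pow_sub_C (1 : F) (by omega : N ≠ 0)
    rwa [map_one] at this
  have hdegX : (X ^ N - 1 : F[X]).degree = N := by
    rw [show (1 : F[X]) = C 1 by rw [map_one], degree_X_pow_sub_C hn']
  constructor
  · rintro ⟨-, h2, h3⟩
    -- surjectivity of `β ↦ stdChar p β`
    have hroot : ∀ γ : E, ∃ t : ZMod p, ψ t = χ γ := by
      intro γ
      have hpow : χ γ ^ p = 1 := by
        rw [← AddChar.map_nsmul_eq_pow, show p • γ = 0 by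
          rw [nsmul_eq_mul, CharP.cast_eq_zero E p, zero_mul], AddChar.map_zero_eq_one]
      obtain ⟨i, hi, hζi⟩ := hζ.eq_pow_of_pow_eq_one hpow
      exact ⟨(i : ZMod p), by rw [hψ, ZMod.val_natCast, Nat.mod_eq_of_lt hi, hζi]⟩
    choose c hc using hroot
    have hcadd : ∀ x y, c (x + y) = c x + c y := by
      intro x y
      refine hψinj ?_
      rw [hc, AddChar.map_add_eq_mul, AddChar.map_add_eq_mul, ← hc, ← hc]
    let cAdd : E →+ ZMod p := AddMonoidHom.mk' c hcadd
    have hsmul : ∀ (z : ZMod p) (x : E), c (z • x) = z * c x := by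
      intro z x
      have h1 : z • x = (z.val : ℕ) • x := by
        rw [← Nat.cast_smul_eq_nsmul (ZMod p), ZMod.natCast_val, ZMod.cast_id]
      rw [h1, show c (z.val • x) = z.val • c x from cAdd.map_nsmul z.val x,
        ← Nat.cast_smul_eq_nsmul (ZMod p), smul_eq_mul, ZMod.natCast_val, ZMod.cast_id]
    let cLin : E →ₗ[ZMod p] ZMod p :=
      { toFun := c, map_add' := hcadd, map_smul' := hsmul }
    let B := Algebra.traceForm (ZMod p) E
    have hndB : B.Nondegenerate := traceForm_nondegenerate (ZMod p) E
    set β := (B.toDual hndB).symm cLin with hβdef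
    have hβ : ∀ γ : E, Algebra.trace (ZMod p) E (β * γ) = c γ := by
      intro γ
      have h4 : (B.toDual hndB) β = cLin := (B.toDual hndB).apply_symm_apply cLin
      calc Algebra.trace (ZMod p) E (β * γ) = B β γ := (Algebra.traceForm_apply (R := ZMod p) β γ).symm
        _ = (B.toDual hndB β) γ := (LinearMap.BilinForm.toDual_def hndB).symm
        _ = cLin γ := by rw [h4]
    have hχβ : ∀ γ : E, χ γ = stdChar p β γ := fun γ => by rw [hstdeq, hβ, hc]
    -- normality
    have hli : LinearIndependent F
        (fun i : Fin N => β ^ (Fintype.card F) ^ (i : ℕ)) := by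
      rw [Fintype.linearIndependent_iff]
      intro g hg
      have hfq0 : fqAct F (Pc N g) β = 0 := by
        rw [fqAct_Pc p F]
        simp only [Algebra.smul_def] at hg
        exact hg
      set d := hatc N hn' g with hd
      have hcond : ∀ γ : E, χ (fqAct F (Pc N d) γ) = 1 := by
        intro γ
        rw [hχβ, hstdeq]
        refine (hψ1 _).mpr ?_
        rw [key_pair p F hn' hE d β γ, hd, hatc_hatc, hfq0, zero_mul, map_zero]
      have hzero : Pc N d = 0 :=
        Polynomial.eq_zero_of_dvd_of_degree_lt (h3 (Pc N d) hcond)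
          (lt_of_lt_of_eq (Pc_degree_lt _ hn' d) hdegX.symm)
      intro i
      have hgq : g = hatc N hn' d := by rw [hd, hatc_hatc]
      rw [hgq, hatc]
      exact Pc_eq_zero hzero _
    haveI : Nonempty (Fin N) := ⟨⟨0, hn'⟩⟩
    exact ⟨β, ⟨hli, hli.span_eq_top_of_card_eq_finrank (by simp [hNdef])⟩, hχβ⟩
  · rintro ⟨β, ⟨hli, -⟩, hstd⟩
    have hchi1 : ∀ x : E, χ x = 1 ↔ Algebra.trace (ZMod p) E (β * x) = 0 := by
      intro x
      rw [hstd, hstdeq]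
      exact hψ1 _
    refine ⟨hmon, ?_, ?_⟩
    · intro γ
      rw [fqAct_X_pow_sub_one p F _ γ (hE γ), AddChar.map_zero_eq_one]
    · intro g hg
      set r := g %ₘ (X ^ N - 1) with hr
      have hdeg : r.degree < (N : WithBot ℕ) := by
        rw [← hdegX]; exact degree_modByMonic_lt g hmon
      have hgr : ∀ γ : E, fqAct F g γ = fqAct F r γ := by
        intro γ
        conv_lhs => rw [← modByMonic_add_div g (X ^ N - 1)]
        rw [fqAct_add p F, fqAct_mul p F, fqAct_X_pow_sub_one p F _ _ (hE _), add_zero]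
      set cr := fun i : Fin N => r.coeff (i : ℕ) with hcr
      have hrP : r = Pc N cr := eq_Pc_of_degree_lt r hdeg
      have hcond : ∀ γ : E, Algebra.trace (ZMod p) E (fqAct F (Pc N (hatc N hn' cr)) β * γ) = 0 := by
        intro γ
        rw [← key_pair p F hn' hE cr β γ, ← hrP, ← hgr γ, ← hchi1]
        exact hg γ
      have h0 : fqAct F (Pc N (hatc N hn' cr)) β = 0 := hnd _ hcond
      have hall : ∀ j, hatc N hn' cr j = 0 := by
        refine Fintype.linearIndependent_iff.mp hli (fun j => hatc N hn' cr j) ?_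
        simp only [Algebra.smul_def]
        rw [← fqAct_Pc p F]
        exact h0
      have hcr0 : ∀ i, cr i = 0 := by
        intro i
        have hcq : cr = hatc N hn' (hatc N hn' cr) := (hatc_hatc N hn' cr).symm
        rw [hcq, hatc]
        exact hall _
      have hr0 : r = 0 := by
        rw [hrP, Pc]
        exact Finset.sum_eq_zero fun i _ => by rw [hcr0 i, map_zero, zero_mul]
      exact (modByMonic_eq_zero_iff_dvd hmon).mp hr0
end
end

section
/- Write n = p^u · v with gcd(v, p) = 1, where p is the characteristic of F_q. Every monic irreducible divisor of x^n - 1 over F_q is self-reciprocal if and only if q^j ≡ -1 (mod v) for some positive integer j ≤ v. -/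
open Polynomial

noncomputable section

lemma aeval_pow_card_pow {F : Type*} [Field F] [Fintype F] {E : Type*} [Field E] [Algebra F E]
    (t : ℕ) (h : F[X]) (x : E) :
    aeval (x ^ Fintype.card F ^ t) h = (aeval x h) ^ Fintype.card F ^ t := by
  obtain ⟨p, hchar⟩ := CharP.exists F
  haveI := hchar
  haveI : Fact p.Prime := ⟨CharP.char_is_prime F p⟩
  haveI : CharP E p := charP_of_injective_algebraMap (algebraMap F E).injective p
  obtain ⟨k, hp, hq⟩ := FiniteField.card F p
  have hqt : Fintype.card F ^ t = p ^ ((k : ℕ) * t) := by rw [hq, ← pow_mul]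
  have key : ∀ y : E, y ^ Fintype.card F ^ t = iterateFrobenius E p ((k:ℕ)*t) y := fun y => by
    rw [iterateFrobenius_def, hqt]
  rw [key, key, aeval_def, aeval_def, hom_eval₂]
  congr 1
  ext a
  simp only [RingHom.comp_apply, iterateFrobenius_def, ← map_pow, ← hqt,
    FiniteField.pow_card_pow]

lemma aeval_reverse_eq_zero_iff {F : Type*} [Field F] {E : Type*} [Field E] [Algebra F E]
    (f : F[X]) {x : E} (hx : x ≠ 0) :
    aeval x⁻¹ f.reverse = 0 ↔ aeval x f = 0 := by
  letI := invertibleOfNonzero hx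
  have := Polynomial.eval₂_reverse_eq_zero_iff (algebraMap F E) x f
  rwa [invOf_eq_inv, ← aeval_def, ← aeval_def] at this

lemma monicRecip_monic {F : Type*} [Field F] {f : F[X]} (hm : f.Monic) (h0 : f.coeff 0 ≠ 0) :
    (monicRecip f).Monic := by
  have ht : f.natTrailingDegree = 0 := natTrailingDegree_eq_zero.mpr (Or.inr h0)
  have : f.trailingCoeff = f.coeff 0 := by rw [trailingCoeff, ht]
  unfold monicRecip
  unfold Monic
  rw [leadingCoeff_mul, leadingCoeff_C, reverse_leadingCoeff, this, inv_mul_cancel₀ h0]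

lemma monicRecip_natDegree {F : Type*} [Field F] {f : F[X]} (h0 : f.coeff 0 ≠ 0) :
    (monicRecip f).natDegree = f.natDegree := by
  have ht : f.natTrailingDegree = 0 := natTrailingDegree_eq_zero.mpr (Or.inr h0)
  unfold monicRecip
  rw [natDegree_C_mul (inv_ne_zero h0), reverse_natDegree, ht, Nat.sub_zero]

lemma monicRecip_eq_self_of_dvd {F : Type*} [Field F] {f : F[X]} (hm : f.Monic)
    (h0 : f.coeff 0 ≠ 0) (hdvd : f ∣ monicRecip f) : monicRecip f = f :=
  Polynomial.eq_of_monic_of_associated (monicRecip_monic hm h0) hm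
    (associated_of_dvd_of_natDegree_le hdvd ((monicRecip_monic hm h0).ne_zero)
      (monicRecip_natDegree h0).le).symm


lemma recip_of_cong {F : Type*} [Field F] [Fintype F] {v : ℕ} (hv : 1 ≤ v)
    {j : ℕ} (hcong : (Fintype.card F : ℤ) ^ j ≡ -1 [ZMOD (v : ℤ)])
    {f : F[X]} (hmon : f.Monic) (hirr : Irreducible f) (hdvd : f ∣ X ^ v - 1) :
    monicRecip f = f := by
  set q := Fintype.card F with hq
  have hv0 : ¬ (0 : ℕ) = v := by omega
  have hXv0 : ((X ^ v - 1 : F[X])).coeff 0 = -1 := by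
    simp [coeff_X_pow, hv0]
  have h0 : f.coeff 0 ≠ 0 := by
    intro h
    have : (X : F[X]) ∣ X ^ v - 1 := dvd_trans (X_dvd_iff.mpr h) hdvd
    rw [X_dvd_iff, hXv0] at this
    exact (neg_ne_zero.mpr one_ne_zero) this
  haveI := Fact.mk hirr
  set α := AdjoinRoot.root f with hαdef
  have hroot : aeval α f = 0 := by rw [AdjoinRoot.aeval_eq, AdjoinRoot.mk_self]
  have hα : α ^ v = 1 := by
    obtain ⟨c, hc⟩ := hdvd
    have := congrArg (aeval α) hc
    rw [map_mul, hroot, zero_mul, map_sub, map_pow, aeval_X, map_one, sub_eq_zero] at this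
    exact this
  have hα0 : α ≠ 0 := by
    intro h
    rw [h, zero_pow (by omega : v ≠ 0)] at hα
    exact zero_ne_one hα
  have hdvd2 : v ∣ q ^ j + 1 := by
    have h1 : (v : ℤ) ∣ (-1 - (q : ℤ) ^ j) := Int.ModEq.dvd hcong
    have h1' : (v : ℤ) ∣ -(-1 - (q : ℤ) ^ j) := dvd_neg.mpr h1
    have h2 : (v : ℤ) ∣ ((q ^ j + 1 : ℕ) : ℤ) := by push_cast; simpa using h1'
    exact_mod_cast h2
  have hpow : α ^ (q ^ j) = α⁻¹ := by
    obtain ⟨c, hc⟩ := hdvd2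
    refine eq_inv_of_mul_eq_one_left ?_
    rw [← pow_succ, hc, pow_mul, hα, one_pow]
  have hrootinv : aeval α⁻¹ f = 0 := by
    rw [← hpow]
    rw [aeval_pow_card_pow j f α, hroot, zero_pow (pow_ne_zero j Fintype.card_ne_zero)]
  have hrev : aeval α f.reverse = 0 := by
    have := (aeval_reverse_eq_zero_iff f (inv_ne_zero hα0)).mpr hrootinv
    rwa [inv_inv] at this
  have hmr : aeval α (monicRecip f) = 0 := by
    unfold monicRecip
    rw [map_mul, hrev, mul_zero]
  have hminpoly : minpoly F α = f := by
    rw [AdjoinRoot.minpoly_root hmon.ne_zero, hmon.leadingCoeff, inv_one, map_one, mul_one]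
  have hdd : f ∣ monicRecip f := by
    have h := minpoly.dvd F α hmr
    rwa [hminpoly] at h
  exact monicRecip_eq_self_of_dvd hmon h0 hdd

lemma exists_cong_of_recip {F : Type*} [Field F] [Fintype F] (p : ℕ) [Fact p.Prime] [CharP F p]
    {v : ℕ} (hv1 : 1 ≤ v) (hv : Nat.Coprime v p) (hv2 : ¬ v ∣ 2)
    (H : ∀ f : F[X], f.Monic → Irreducible f → f ∣ X ^ v - 1 → monicRecip f = f) :
    ∃ i : ℕ, 1 ≤ i ∧ i ≤ v ∧ (Fintype.card F : ℤ) ^ i ≡ -1 [ZMOD (v : ℤ)] := by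
  classical
  set q := Fintype.card F with hqdef
  haveI : NeZero v := ⟨by omega⟩
  obtain ⟨k, hpp, hqcard⟩ := FiniteField.card F p
  have hqv : Nat.Coprime q v := by
    rw [hqdef, hqcard]; exact Nat.Coprime.pow_left _ hv.symm
  set Q : (ZMod v)ˣ := ZMod.unitOfCoprime q hqv with hQdef
  set m := orderOf Q with hmdef
  have hm1 : 1 ≤ m := orderOf_pos Q
  have hmv : m ≤ v := by
    have h1 : m ∣ Fintype.card (ZMod v)ˣ := orderOf_dvd_card
    rw [ZMod.card_units_eq_totient] at h1
    exact le_trans (Nat.le_of_dvd (Nat.totient_pos.mpr (by omega)) h1) (Nat.totient_le v)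
  -- pick a monic irreducible factor of the cyclotomic polynomial
  have hΦmonic : (cyclotomic v F).Monic := cyclotomic.monic v F
  have hΦne : (cyclotomic v F) ≠ 0 := hΦmonic.ne_zero
  have hΦdeg : (cyclotomic v F).natDegree = v.totient := natDegree_cyclotomic v F
  have hΦnu : ¬ IsUnit (cyclotomic v F) := by
    intro h
    have := natDegree_eq_zero_of_isUnit h
    rw [hΦdeg] at this
    have := Nat.totient_pos.mpr (show 0 < v by omega)
    omega
  obtain ⟨g0, hg0irr, hg0dvd⟩ := WfDvdMonoid.exists_irreducible_factor hΦnu hΦne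
  have hg0ne : g0 ≠ 0 := hg0irr.ne_zero
  set g := normalize g0 with hgdef
  have hgmonic : g.Monic := monic_normalize hg0ne
  have hgirr : Irreducible g := (Associated.irreducible (associated_normalize _) hg0irr)
  have hgΦ : g ∣ cyclotomic v F := (normalize_dvd_iff.mpr hg0dvd)
  have hgdvd : g ∣ X ^ v - 1 := hgΦ.trans (cyclotomic.dvd_X_pow_sub_one v F)
  have hgne : g ≠ 0 := hgmonic.ne_zero
  haveI := Fact.mk hgirr
  set K := AdjoinRoot g with hKdef
  set α := AdjoinRoot.root g with hαdef
  haveI : CharP K p := charP_of_injective_algebraMap (algebraMap F K).injective p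
  have hαroot : aeval α g = 0 := by rw [AdjoinRoot.aeval_eq, AdjoinRoot.mk_self]
  have hpv : ¬ p ∣ v := (Nat.Prime.coprime_iff_not_dvd hpp).mp hv.symm
  haveI : NeZero ((v : ℕ) : K) := ⟨by
    rw [Ne, CharP.cast_eq_zero_iff K p v]
    exact hpv⟩
  have hζ : IsPrimitiveRoot α v := by
    rw [← isRoot_cyclotomic_iff (R := K) (n := v)]
    obtain ⟨c, hc⟩ := hgΦ
    have : aeval α (cyclotomic v F) = 0 := by rw [hc, map_mul, hαroot, zero_mul]
    rwa [IsRoot.def, ← map_cyclotomic v (algebraMap F K), eval_map, ← aeval_def]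
  have hα0 : α ≠ 0 := by
    intro h
    have := hζ.pow_eq_one
    rw [h, zero_pow (by omega : v ≠ 0)] at this
    exact zero_ne_one this
  have hαu : IsUnit α := hζ.isUnit (by omega)
  set αu : Kˣ := hαu.unit with hαudef
  have hαuval : (αu : K) = α := hαu.unit_spec
  have hζu : IsPrimitiveRoot αu v := hζ.isUnit_unit (by omega)
  have hordαu : orderOf αu = v := hζu.eq_orderOf.symm
  have hpow_iff : ∀ a b : ℕ, (α ^ a = α ^ b) ↔ (αu ^ a = αu ^ b) := by
    intro a b
    constructor
    · intro h
      apply Units.ext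
      rw [Units.val_pow_eq_pow_val, Units.val_pow_eq_pow_val, hαuval]
      exact h
    · intro h
      have := congrArg Units.val h
      rwa [Units.val_pow_eq_pow_val, Units.val_pow_eq_pow_val, hαuval] at this
  have aevalq : ∀ (t : ℕ) (h : F[X]) (x : AdjoinRoot g),
      aeval (x ^ q ^ t) h = (aeval x h) ^ q ^ t := by
    intro t h x
    rw [hqdef]
    exact aeval_pow_card_pow t h x
  -- self-reciprocity gives that α⁻¹ is a root of g
  have hMR : monicRecip g = g := H g hgmonic hgirr hgdvd
  have hrootinv : aeval α⁻¹ g = 0 := by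
    have h1 : aeval α⁻¹ (monicRecip g) = 0 := by
      unfold monicRecip
      rw [map_mul, (aeval_reverse_eq_zero_iff g hα0).mpr hαroot, mul_zero]
    rwa [hMR] at h1
  -- finiteness
  haveI : Module.Finite F K := (AdjoinRoot.powerBasis hgne).finite
  haveI : Finite K := Module.finite_of_finite F
  haveI : Fintype K := Fintype.ofFinite K
  set d := g.natDegree with hddef
  have hfinrank : Module.finrank F K = d := by
    rw [(AdjoinRoot.powerBasis hgne).finrank, AdjoinRoot.powerBasis_dim]
  have hcardK : Fintype.card K = q ^ d := by rw [Module.card_eq_pow_finrank (K := F) (V := K), hfinrank]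
  have hq2 : 1 < q := Fintype.one_lt_card
  -- every element of K is fixed by x ↦ x^(q^m)
  have hαm : α ^ q ^ m = α := by
    have hQm : Q ^ m = 1 := pow_orderOf_eq_one Q
    have hcast : ((q ^ m : ℕ) : ZMod v) = ((1 : ℕ) : ZMod v) := by
      push_cast
      have := congrArg (Units.val) hQm
      rw [Units.val_pow_eq_pow_val, ZMod.coe_unitOfCoprime] at this
      simpa using this
    have hmod : q ^ m ≡ 1 [MOD v] := (ZMod.natCast_eq_natCast_iff _ _ _).mp hcast
    have hu : αu ^ q ^ m = αu ^ 1 := by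
      rw [pow_eq_pow_iff_modEq, hordαu]
      exact hmod
    have := (hpow_iff _ _).mpr hu
    rwa [pow_one] at this
  have hfix : ∀ y : K, y ^ q ^ m = y := by
    intro y
    obtain ⟨h', rfl⟩ := AdjoinRoot.mk_surjective y
    rw [← AdjoinRoot.aeval_eq, ← aevalq m h' α, hαm]
  -- d ≤ m by counting roots of X^(q^m) - X
  have hdm : d ≤ m := by
    set N := q ^ m with hNdef
    have hN2 : 2 ≤ N := by
      have h1 : q ≤ q ^ m := Nat.le_self_pow (by omega) q
      omega
    set P : K[X] := X ^ N - X with hPdef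
    have hPdeg : P.natDegree = N := by
      rw [hPdef, natDegree_sub_eq_left_of_natDegree_lt] <;>
        simp [natDegree_X_pow, natDegree_X] <;> omega
    have hPne : P ≠ 0 := by
      intro h
      rw [h] at hPdeg
      simp at hPdeg
      omega
    have hsub : (Finset.univ : Finset K) ⊆ P.roots.toFinset := by
      intro y _
      rw [Multiset.mem_toFinset, mem_roots hPne]
      simp only [IsRoot.def, hPdef, eval_sub, eval_pow, eval_X]
      rw [hfix y, sub_self]
    have : Fintype.card K ≤ N := by
      calc Fintype.card K = (Finset.univ : Finset K).card := rfl
      _ ≤ P.roots.toFinset.card := Finset.card_le_card hsub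
      _ ≤ Multiset.card P.roots := Multiset.toFinset_card_le _
      _ ≤ P.natDegree := card_roots' P
      _ = N := hPdeg
    rw [hcardK] at this
    exact (Nat.pow_le_pow_iff_right hq2).mp this
  -- the roots of g in K
  have hminpoly : minpoly F α = g := by
    rw [AdjoinRoot.minpoly_root hgne, hgmonic.leadingCoeff, inv_one, map_one, mul_one]
  have hsplits : Splits (g.map (algebraMap F K)) := by
    have h1 := Normal.splits (inferInstance : Normal F K) α
    rwa [hminpoly] at h1
  have hvF : ((v : ℕ) : F) ≠ 0 := by
    rw [Ne, CharP.cast_eq_zero_iff F p v]; exact hpv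
  have hsep : g.Separable := by
    have h1 : (X ^ v - 1 : F[X]).Separable := by
      have := separable_X_pow_sub_C (1 : F) hvF one_ne_zero
      rwa [map_one] at this
    exact h1.of_dvd hgdvd
  set R : Multiset K := (g.map (algebraMap F K)).roots with hRdef
  have hRcard : Multiset.card R = d := by rw [hRdef, ← hsplits.natDegree_eq_card_roots, natDegree_map]
  have hRnodup : R.Nodup := nodup_roots (hsep.map)
  set T := R.toFinset with hTdef
  have hTcard : T.card = d := by rw [hTdef, Multiset.toFinset_card_of_nodup hRnodup, hRcard]
  have hgmapne : g.map (algebraMap F K) ≠ 0 := map_ne_zero hgne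
  have hmemT : ∀ y : K, aeval y g = 0 → y ∈ T := by
    intro y hy
    rw [hTdef, Multiset.mem_toFinset, hRdef, mem_roots hgmapne, IsRoot.def, eval_map, ← aeval_def]
    exact hy
  -- the Frobenius orbit of α
  have hpowinj : ∀ i ∈ Finset.range m, ∀ j ∈ Finset.range m,
      α ^ q ^ i = α ^ q ^ j → i = j := by
    intro i hi j hj hij
    rw [Finset.mem_range] at hi hj
    rw [hpow_iff, pow_eq_pow_iff_modEq, hordαu] at hij
    have : ((q ^ i : ℕ) : ZMod v) = ((q ^ j : ℕ) : ZMod v) := (ZMod.natCast_eq_natCast_iff _ _ _).mpr hij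
    have hQij : Q ^ i = Q ^ j := by
      apply Units.ext
      rw [Units.val_pow_eq_pow_val, Units.val_pow_eq_pow_val, ZMod.coe_unitOfCoprime]
      push_cast at this ⊢
      exact this
    rw [pow_eq_pow_iff_modEq, ← hmdef] at hQij
    exact Nat.ModEq.eq_of_lt_of_lt hQij hi hj
  set S : Finset K := (Finset.range m).image (fun i => α ^ q ^ i) with hSdef
  have hScard : S.card = m := by
    rw [hSdef, Finset.card_image_of_injOn hpowinj, Finset.card_range]
  have hST : S ⊆ T := by
    intro y hy
    rw [hSdef, Finset.mem_image] at hy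
    obtain ⟨i, _, rfl⟩ := hy
    apply hmemT
    rw [aevalq i g α, hαroot, zero_pow (pow_ne_zero i (by omega))]
  have hmd : m ≤ d := by rw [← hScard, ← hTcard]; exact Finset.card_le_card hST
  have hSeqT : S = T := Finset.eq_of_subset_of_card_le hST (by omega)
  have hαinv : α⁻¹ ∈ S := by rw [hSeqT]; exact hmemT _ hrootinv
  rw [hSdef, Finset.mem_image] at hαinv
  obtain ⟨i, hiRange, hi⟩ := hαinv
  rw [Finset.mem_range] at hiRange
  -- conclude
  have hvdvd : v ∣ q ^ i + 1 := by
    rw [← hζ.pow_eq_one_iff_dvd, pow_succ, hi, inv_mul_cancel₀ hα0]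
  have hi1 : 1 ≤ i := by
    rcases Nat.eq_zero_or_pos i with h | h
    · exfalso; apply hv2; simpa [h] using hvdvd
    · exact h
  refine ⟨i, hi1, by omega, ?_⟩
  have : (v : ℤ) ∣ (-1 - (q : ℤ) ^ i) := by
    have h2 : (v : ℤ) ∣ ((q ^ i + 1 : ℕ) : ℤ) := Int.natCast_dvd_natCast.mpr hvdvd
    push_cast at h2
    have : (v : ℤ) ∣ -((q : ℤ) ^ i + 1) := h2.neg_right
    convert this using 1
    ring
  exact Int.modEq_iff_dvd.mpr this

theorem selfReciprocal_irreducible_divisors_iff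
    (F : Type*) [Field F] [Fintype F] (p : ℕ) [Fact p.Prime] [CharP F p]
    (n u v : ℕ) (hn : 1 ≤ n) (hnv : n = p ^ u * v) (hv : Nat.Coprime v p) :
    (∀ f : F[X], f.Monic → Irreducible f → f ∣ X ^ n - 1 → monicRecip f = f) ↔
      ∃ j : ℕ, 1 ≤ j ∧ j ≤ v ∧ (Fintype.card F : ℤ) ^ j ≡ -1 [ZMOD (v : ℤ)] := by
  have hn0 : n ≠ 0 := by omega
  have hv1 : 1 ≤ v := by
    rcases Nat.eq_zero_or_pos v with h | h
    · exfalso; rw [h, mul_zero] at hnv; omega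
    · exact h
  have hpu : p ^ u ≠ 0 := pow_ne_zero u (Fact.out (p := p.Prime)).pos.ne'
  haveI : CharP F[X] p := inferInstance
  have hfactor : (X ^ n - 1 : F[X]) = (X ^ v - 1) ^ p ^ u := by
    rw [sub_pow_char_pow, ← pow_mul, one_pow, mul_comm v (p ^ u), ← hnv]
  constructor
  · intro H
    by_cases hv2 : v ∣ 2
    · refine ⟨v, hv1, le_refl v, ?_⟩
      have hvle : v ≤ 2 := Nat.le_of_dvd (by omega) hv2
      interval_cases v
      · exact Int.modEq_iff_dvd.mpr (by simpa using one_dvd _)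
      · have hp2 : p ≠ 2 := by
          intro h
          rw [h] at hv
          simp [Nat.Coprime] at hv
        have hpodd : Odd p := (Fact.out (p := p.Prime)).odd_of_ne_two hp2
        obtain ⟨k, hpp, hqcard⟩ := FiniteField.card F p
        have hqodd : Odd (Fintype.card F) := by rw [hqcard]; exact hpodd.pow
        obtain ⟨t, ht⟩ := hqodd
        apply Int.modEq_iff_dvd.mpr
        refine ⟨-((2 : ℤ) * t ^ 2 + 2 * t + 1), ?_⟩
        have : (Fintype.card F : ℤ) = 2 * t + 1 := by exact_mod_cast congrArg (Nat.cast : ℕ → ℤ) ht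
        rw [this]
        push_cast
        ring
    · apply exists_cong_of_recip p hv1 hv hv2
      intro f hm hi hd
      exact H f hm hi (by rw [hfactor]; exact hd.trans (dvd_pow_self _ hpu))
  · rintro ⟨j, hj1, hjv, hcong⟩ f hm hi hd
    have hprime : Prime f := hi.prime
    have hfd : f ∣ X ^ v - 1 := hprime.dvd_of_dvd_pow (by rw [← hfactor]; exact hd)
    exact recip_of_cong hv1 hcong hm hi hfd
end
end
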